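/- Let A, B, a, b be positive integers with a ∣ A and b ∣ B, and let G = ℤ_A × ℤ_B. If Λ ⊆ G is such that Q*_{a,b} + Λ tiles G, where Q*_{a,b} = [A/a] × [B/b], then Λ is a spectrum of the cube Q_{a,b} = [a] × [b]. -/

import Mathlib

/-!
Let `Q` be the cube, `Q*` the dual cube and `ψ_ξ = e2 A B ξ`. Since `Q* + Λ` tiles `G`,
`(∑_{q ∈ Q*} ψ_ξ q) (∑_{λ ∈ Λ} ψ_ξ λ) = ∑_{g ∈ G} ψ_ξ g = 0` for `ξ ≠ 0`, and `|Λ| = |G| / |Q*| = |Q|`.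
For `ξ = x - y` with `x ≠ y` in `Q` the first factor is a product of two geometric sums which do
not vanish because `a · (A / a) = A` and `b · (B / b) = B`; hence the characters indexed by `Q`
are orthogonal on `Λ`. So the square matrix `(ψ_λ x)_{λ ∈ Λ, x ∈ Q}` has orthogonal columns of
equal norm, and therefore orthogonal rows, which is the spectrum property.
-/
/-- The cube `[a] × [b]` in `ℤ_A × ℤ_B`. -/
def cube2 (A B a b : ℕ) : Finset (ZMod A × ZMod B) :=
  Finset.image (fun v : Fin a × Fin b => (((v.1 : ℕ) : ZMod A), ((v.2 : ℕ) : ZMod B)))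
    Finset.univ

/-- The character `e_λ(x) = exp(2πi(λ₁x₁/A + λ₂x₂/B))` on `ℤ_A × ℤ_B`. -/
noncomputable def e2 (A B : ℕ) (lam x : ZMod A × ZMod B) : ℂ :=
  Complex.exp (2 * (Real.pi : ℂ) * Complex.I *
    ((lam.1.val : ℂ) * (x.1.val : ℂ) / (A : ℂ) + (lam.2.val : ℂ) * (x.2.val : ℂ) / (B : ℂ)))

/-- `Λ` is a spectrum of `E ⊆ ℤ_A × ℤ_B`. -/
def IsSpectrum2 (A B : ℕ) (E L : Finset (ZMod A × ZMod B)) : Prop :=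
  L.card = E.card ∧
  ∀ l ∈ L, ∀ m ∈ L, l ≠ m →
    ∑ x ∈ E, e2 A B l x * (starRingEnd ℂ) (e2 A B m x) = 0

/-- `E` tiles the abelian group `G` with translate set `T`. -/
def Tiles {G : Type*} [AddCommGroup G] (E T : Finset G) : Prop :=
  ∀ x : G, ∃! p : G × G, p.1 ∈ E ∧ p.2 ∈ T ∧ x = p.1 + p.2


open Finset ComplexConjugate Matrix

namespace Tiles

variable {G : Type*} [AddCommGroup G] [Fintype G] {E T : Finset G}

theorem sum_add_eq_sum {M : Type*} [AddCommMonoid M] (h : Tiles E T) (f : G → M) :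
    ∑ p ∈ E ×ˢ T, f (p.1 + p.2) = ∑ g, f g := by
  refine sum_bij (fun p _ => p.1 + p.2) (fun _ _ => mem_univ _) ?_ ?_ fun _ _ => rfl
  · intro p hp q hq hpq
    simp only [mem_product] at hp hq
    exact (h _).unique ⟨hp.1, hp.2, rfl⟩ ⟨hq.1, hq.2, hpq⟩
  · intro g _
    obtain ⟨p, ⟨hpE, hpT, rfl⟩, -⟩ := h g
    exact ⟨p, mem_product.2 ⟨hpE, hpT⟩, rfl⟩

theorem card_mul_card (h : Tiles E T) : #E * #T = Fintype.card G := by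
  simpa [card_product] using h.sum_add_eq_sum (fun _ => (1 : ℕ))

theorem sum_addChar_eq_zero {R : Type*} [CommRing R] [IsDomain R] (h : Tiles E T)
    {ψ : AddChar G R} (hψ : ψ ≠ 1) (hE : ∑ e ∈ E, ψ e ≠ 0) : ∑ t ∈ T, ψ t = 0 := by
  have : (∑ e ∈ E, ψ e) * ∑ t ∈ T, ψ t = 0 := by
    rw [sum_mul_sum, ← sum_product', ← AddChar.sum_eq_zero_of_ne_one hψ,
      ← h.sum_add_eq_sum]
    simp only [AddChar.map_add_eq_mul]
  exact (mul_eq_zero.1 this).resolve_left hE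

end Tiles

/-- With `M = (f s t)` square, `(#S)⁻¹ • Mᴴ` is a left inverse of `M`, hence also a right
inverse. -/
theorem orthogonal_rows_of_orthogonal_columns {𝕜 α β : Type*} [RCLike 𝕜] {S : Finset α}
    {T : Finset β} (f : α → β → 𝕜) (hcard : #S = #T) (hunit : ∀ s ∈ S, ∀ t ∈ T, f s t * conj (f s t) = 1)
    (hcol : ∀ t ∈ T, ∀ t' ∈ T, t ≠ t' → ∑ s ∈ S, f s t * conj (f s t') = 0)
    {s s' : α} (hs : s ∈ S) (hs' : s' ∈ S) (hss' : s ≠ s') :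
    ∑ t ∈ T, f s t * conj (f s' t) = 0 := by
  classical
  let M : Matrix S T 𝕜 := of fun s t => f s t
  have hS : (#S : 𝕜) ≠ 0 := Nat.cast_ne_zero.2 (card_ne_zero_of_mem hs)
  have hMM : ((#S : 𝕜)⁻¹ • Mᴴ) * M = 1 := by
    ext t t'
    rw [smul_mul, Matrix.smul_apply, mul_apply, one_apply, smul_eq_mul]
    simp only [conjTranspose_apply, M, of_apply, RCLike.star_def]
    split_ifs with htt'
    · simp_rw [htt', mul_comm (conj _), sum_coe_sort S (fun s => f s t' * conj (f s t'))]
      rw [sum_congr rfl fun s hs => hunit s hs t' t'.2, sum_const, nsmul_one, inv_mul_cancel₀ hS]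
    · simp_rw [mul_comm (conj _), sum_coe_sort S (fun s => f s t' * conj (f s t))]
      rw [hcol t' t'.2 t t.2 fun h => htt' (Subtype.ext h.symm), mul_zero]
  have hMM' := congrFun (congrFun ((Matrix.mul_eq_one_comm_of_equiv
    (Fintype.equivOfCardEq (by simpa using hcard.symm))).1 hMM) ⟨s, hs⟩) ⟨s', hs'⟩
  rw [Matrix.mul_smul, Matrix.smul_apply, mul_apply,
    one_apply_ne fun h => hss' (congrArg Subtype.val h), smul_eq_mul, mul_eq_zero] at hMM'
  rw [← sum_coe_sort T]
  simpa [M, hS, RCLike.star_def] using hMM'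

theorem geom_sum_ne_zero_of_pow_eq_one_imp {K : Type*} [CommRing K] [CharZero K] {z : K}
    {n : ℕ} (hn : n ≠ 0) (hz : z ^ n = 1 → z = 1) : ∑ i ∈ range n, z ^ i ≠ 0 := by
  by_cases h1 : z = 1
  · simpa [h1] using hn
  · intro h0
    have := geom_sum_mul z n
    rw [h0, zero_mul, eq_comm, sub_eq_zero] at this
    exact h1 (hz this)

theorem ZMod.natCast_sub_eq_zero_of_nsmul_eq_zero {N a n i j : ℕ} [NeZero N] (hN : a * n = N)
    (hi : i < a) (hj : j < a) (h : n • ((i : ZMod N) - (j : ZMod N)) = 0) :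
    (i : ZMod N) - (j : ZMod N) = 0 := by
  have hn : (n : ℤ) ≠ 0 := Nat.cast_ne_zero.2 (right_ne_zero_of_mul (hN ▸ NeZero.ne N))
  have hcast : (((i - j) * n : ℤ) : ZMod N) = 0 := by push_cast; rw [← h, nsmul_eq_mul, mul_comm]
  have hdvd : (a : ℤ) * n ∣ (i - j) * n := by
    have := (ZMod.intCast_zmod_eq_zero_iff_dvd _ N).1 hcast
    rwa [← hN, Nat.cast_mul] at this
  have hij : (i : ℤ) - j = 0 :=
    Int.eq_zero_of_abs_lt_dvd (Int.dvd_of_mul_dvd_mul_right hn hdvd) (by rw [abs_lt]; omega)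
  exact_mod_cast congrArg (Int.cast : ℤ → ZMod N) hij

theorem cube2_eq_product (A B n m : ℕ) :
    cube2 A B n m = (range n).image Nat.cast ×ˢ (range m).image Nat.cast := by
  ext ⟨x, y⟩
  simp [cube2, Fin.exists_iff]

theorem ZMod.natCast_injOn_range {N n : ℕ} (h : n ≤ N) :
    Set.InjOn (Nat.cast : ℕ → ZMod N) (range n) :=
  (CharP.natCast_injOn_Iio (ZMod N) N).mono fun _ hk => (mem_range.1 hk).trans_le h

theorem card_cube2 {A B n m : ℕ} (hn : n ≤ A) (hm : m ≤ B) : #(cube2 A B n m) = n * m := by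
  rw [cube2_eq_product, card_product, card_image_of_injOn (ZMod.natCast_injOn_range hn),
    card_image_of_injOn (ZMod.natCast_injOn_range hm), card_range, card_range]

theorem sum_cube2_mul {R : Type*} [CommSemiring R] {A B n m : ℕ} (hn : n ≤ A) (hm : m ≤ B)
    (f : ZMod A → R) (g : ZMod B → R) :
    ∑ x ∈ cube2 A B n m, f x.1 * g x.2 = (∑ i ∈ range n, f i) * ∑ j ∈ range m, g j := by
  rw [cube2_eq_product, sum_product, sum_image (ZMod.natCast_injOn_range hn), sum_mul_sum]
  exact sum_congr rfl fun i _ => sum_image (ZMod.natCast_injOn_range hm)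

theorem sum_range_stdAddChar_ne_zero {N a n i j : ℕ} [NeZero N] (hN : a * n = N) (hi : i < a)
    (hj : j < a) :
    ∑ k ∈ range n, ZMod.stdAddChar (((i : ZMod N) - (j : ZMod N)) * (k : ZMod N)) ≠ 0 := by
  have hn : n ≠ 0 := right_ne_zero_of_mul (hN ▸ NeZero.ne N)
  simp_rw [mul_comm _ (Nat.cast _), ← nsmul_eq_mul, AddChar.map_nsmul_eq_pow]
  refine geom_sum_ne_zero_of_pow_eq_one_imp hn fun h => ?_
  rw [← AddChar.map_nsmul_eq_pow, ← AddChar.map_zero_eq_one (ZMod.stdAddChar (N := N)),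
    ZMod.injective_stdAddChar.eq_iff] at h
  rw [ZMod.natCast_sub_eq_zero_of_nsmul_eq_zero hN hi hj h, AddChar.map_zero_eq_one]

theorem e2_comm (A B : ℕ) (ξ x : ZMod A × ZMod B) : e2 A B ξ x = e2 A B x ξ := by
  simp only [e2, mul_comm]

section Characters

variable {A B : ℕ} [NeZero A] [NeZero B]

open ZMod in
theorem e2_eq_stdAddChar (ξ x : ZMod A × ZMod B) :
    e2 A B ξ x = stdAddChar (ξ.1 * x.1) * stdAddChar (ξ.2 * x.2) := by
  rw [← natCast_zmod_val ξ.1, ← natCast_zmod_val x.1, ← natCast_zmod_val ξ.2,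
    ← natCast_zmod_val x.2, ← Nat.cast_mul, ← Nat.cast_mul, stdAddChar_apply, stdAddChar_apply,
    toCircle_natCast, toCircle_natCast, e2, ← Complex.exp_add]
  congr 1
  push_cast
  ring

noncomputable def e2Char (ξ : ZMod A × ZMod B) : AddChar (ZMod A × ZMod B) ℂ where
  toFun := e2 A B ξ
  map_zero_eq_one' := by simp [e2_eq_stdAddChar]
  map_add_eq_mul' x y := by
    simp only [e2_eq_stdAddChar, Prod.fst_add, Prod.snd_add, mul_add, AddChar.map_add_eq_mul]
    ring

@[simp]
theorem e2Char_apply (ξ x : ZMod A × ZMod B) : e2Char ξ x = e2 A B ξ x := rfl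

theorem e2Char_ne_one {ξ : ZMod A × ZMod B} (hξ : ξ ≠ 0) : e2Char ξ ≠ 1 := by
  intro h
  have h1 := DFunLike.congr_fun h (1, 0)
  have h2 := DFunLike.congr_fun h (0, 1)
  simp only [e2Char_apply, e2_eq_stdAddChar, AddChar.one_apply, mul_one, one_mul, mul_zero,
    AddChar.map_zero_eq_one] at h1 h2
  rw [← AddChar.map_zero_eq_one (ZMod.stdAddChar (N := A)), ZMod.injective_stdAddChar.eq_iff] at h1
  rw [← AddChar.map_zero_eq_one (ZMod.stdAddChar (N := B)), ZMod.injective_stdAddChar.eq_iff] at h2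
  exact hξ (Prod.ext h1 h2)

theorem e2_mul_conj_e2 (l x y : ZMod A × ZMod B) :
    e2 A B l x * conj (e2 A B l y) = e2 A B (x - y) l := by
  rw [← e2Char_apply, ← e2Char_apply, ← AddChar.map_neg_eq_conj, ← AddChar.map_add_eq_mul,
    ← sub_eq_add_neg, e2Char_apply, e2_comm]

end Characters

section DualCube

variable {A B a b : ℕ} [NeZero A] [NeZero B]

theorem sum_e2Char_dualCube_ne_zero (haA : a ∣ A) (hbB : b ∣ B) {x y : ZMod A × ZMod B}
    (hx : x ∈ cube2 A B a b) (hy : y ∈ cube2 A B a b) :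
    ∑ q ∈ cube2 A B (A / a) (B / b), e2Char (x - y) q ≠ 0 := by
  obtain ⟨x₁, x₂⟩ := x
  obtain ⟨y₁, y₂⟩ := y
  simp only [cube2_eq_product, mem_product, mem_image, mem_range] at hx hy
  obtain ⟨⟨i, hi, rfl⟩, ⟨j, hj, rfl⟩⟩ := hx
  obtain ⟨⟨i', hi', rfl⟩, ⟨j', hj', rfl⟩⟩ := hy
  simp only [e2Char_apply, e2_eq_stdAddChar]
  refine (sum_cube2_mul (Nat.div_le_self A a) (Nat.div_le_self B b)
    (fun u => ZMod.stdAddChar (((i : ZMod A) - (i' : ZMod A)) * u))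
    (fun v => ZMod.stdAddChar (((j : ZMod B) - (j' : ZMod B)) * v))).trans_ne
    (mul_ne_zero (sum_range_stdAddChar_ne_zero (Nat.mul_div_cancel' haA) hi hi')
      (sum_range_stdAddChar_ne_zero (Nat.mul_div_cancel' hbB) hj hj'))

variable {L : Finset (ZMod A × ZMod B)}

theorem card_eq_of_tiles_dualCube (haA : a ∣ A) (hbB : b ∣ B)
    (htile : Tiles (cube2 A B (A / a) (B / b)) L) : #L = a * b := by
  have h := htile.card_mul_card
  rw [card_cube2 (Nat.div_le_self A a) (Nat.div_le_self B b), Fintype.card_prod, ZMod.card,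
    ZMod.card] at h
  have hA : a * (A / a) = A := Nat.mul_div_cancel' haA
  have hB : b * (B / b) = B := Nat.mul_div_cancel' hbB
  have hpos : A / a * (B / b) ≠ 0 :=
    mul_ne_zero (right_ne_zero_of_mul (hA ▸ NeZero.ne A)) (right_ne_zero_of_mul (hB ▸ NeZero.ne B))
  refine mul_left_cancel₀ hpos (h.trans ?_)
  calc A * B = a * (A / a) * (b * (B / b)) := by rw [hA, hB]
    _ = A / a * (B / b) * (a * b) := by ring

theorem sum_e2_mul_conj_eq_zero_of_tiles_dualCube (haA : a ∣ A) (hbB : b ∣ B)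
    (htile : Tiles (cube2 A B (A / a) (B / b)) L) {x y : ZMod A × ZMod B}
    (hx : x ∈ cube2 A B a b) (hy : y ∈ cube2 A B a b) (hxy : x ≠ y) :
    ∑ l ∈ L, e2 A B l x * conj (e2 A B l y) = 0 := by
  simp_rw [e2_mul_conj_e2, ← e2Char_apply]
  exact htile.sum_addChar_eq_zero (e2Char_ne_one (sub_ne_zero.2 hxy))
    (sum_e2Char_dualCube_ne_zero haA hbB hx hy)

end DualCube

theorem dual_tiling_implies_spectrum (A B a b : ℕ) [NeZero A] [NeZero B]
    (haA : a ∣ A) (hbB : b ∣ B)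
    (L : Finset (ZMod A × ZMod B)) (htile : Tiles (cube2 A B (A / a) (B / b)) L) :
    IsSpectrum2 A B (cube2 A B a b) L := by
  have hcard : #L = #(cube2 A B a b) := by
    rw [card_eq_of_tiles_dualCube haA hbB htile,
      card_cube2 (Nat.le_of_dvd (NeZero.pos A) haA) (Nat.le_of_dvd (NeZero.pos B) hbB)]
  refine ⟨hcard, fun l hl m hm hlm => orthogonal_rows_of_orthogonal_columns (e2 A B) hcard
    (fun l _ x _ => ?_) (fun x hx y hy hxy => ?_) hl hm hlm⟩
  · rw [e2_mul_conj_e2, sub_self, e2_comm, ← e2Char_apply, AddChar.map_zero_eq_one]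
  · exact sum_e2_mul_conj_eq_zero_of_tiles_dualCube haA hbB htile hx hy hxy
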